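/- arXiv:0911.2674 — 2 statements merged into one kernel-verified Lean document; each statement's English description precedes it below -/
import Mathlib

section
/- Let A be an (n+1)×(n+1) matrix of natural numbers and fix a column j₀. Then the Jacobi number of A satisfies the cofactor (Laplace-type) expansion along column j₀ in the (max,+) sense: J(A) = max over rows i of ( A(i,j₀) + J(A_{î,ĵ₀}) ), where A_{î,ĵ₀} denotes the n×n matrix obtained from A by deleting row i and column j₀ (a submatrix along the embeddings Fin.succAbove i and Fin.succAbove j₀). -/
/-- The Jacobi number of a square matrix of naturals: the maximum of the
transversal sums `∑ j, B (σ j) j` over all permutations `σ`. -/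
def jacobiNumber {m : ℕ} (B : Matrix (Fin m) (Fin m) ℕ) : ℕ :=
  Finset.univ.sup fun σ : Equiv.Perm (Fin m) => ∑ j, B (σ j) j

/-- (max,+) cofactor expansion of the Jacobi number along a column:
`J(A) = max_i (A i j₀ + J(A with row i and column j₀ removed))`. -/
theorem jacobiNumber_cofactor_expansion (n : ℕ)
    (A : Matrix (Fin (n + 1)) (Fin (n + 1)) ℕ) (j₀ : Fin (n + 1)) :
    jacobiNumber A =
      Finset.univ.sup fun i : Fin (n + 1) =>
        A i j₀ + jacobiNumber (A.submatrix i.succAbove j₀.succAbove) := by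
  apply le_antisymm
  · apply Finset.sup_le
    intro σ _
    set i := σ j₀ with hi
    set e : Option (Fin n) ≃ Option (Fin n) :=
      (finSuccEquiv' j₀).symm.trans (σ.trans (finSuccEquiv' i)) with he
    have hnone : e none = none := by simp [he, hi]
    have hsome : ∀ j : Fin n, e (some j) = some (e.removeNone j) := by
      intro j
      have : ∃ x', e (some j) = some x' := by
        rcases h : e (some j) with _ | x'
        · exact absurd (e.injective (h.trans hnone.symm)) (by simp)
        · exact ⟨x', rfl⟩
      exact (Equiv.removeNone_some e this).symm
    have key : ∀ j : Fin n, σ (j₀.succAbove j) = i.succAbove (e.removeNone j) := by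
      intro j
      have := hsome j
      simp only [he, Equiv.trans_apply, finSuccEquiv'_symm_some, Equiv.coe_fn_mk] at this
      have := congrArg (finSuccEquiv' i).symm this
      simpa using this
    calc ∑ j, A (σ j) j = A i j₀ + ∑ j : Fin n,
          A (i.succAbove (e.removeNone j)) (j₀.succAbove j) := by
          rw [Fin.sum_univ_succAbove _ j₀, ← hi]
          congr 1
          exact Finset.sum_congr rfl fun j _ => by rw [key j]
      _ ≤ A i j₀ + jacobiNumber (A.submatrix i.succAbove j₀.succAbove) := by
          gcongr
          exact Finset.le_sup (f := fun τ : Equiv.Perm (Fin n) =>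
            ∑ j, A.submatrix i.succAbove j₀.succAbove (τ j) j)
            (Finset.mem_univ e.removeNone)
      _ ≤ _ := Finset.le_sup (f := fun i : Fin (n+1) =>
            A i j₀ + jacobiNumber (A.submatrix i.succAbove j₀.succAbove))
            (Finset.mem_univ i)
  · apply Finset.sup_le
    intro i _
    rw [jacobiNumber]
    obtain ⟨τ, -, hτ⟩ := Finset.exists_mem_eq_sup (Finset.univ : Finset (Equiv.Perm (Fin n)))
      Finset.univ_nonempty (fun σ => ∑ j, A.submatrix i.succAbove j₀.succAbove (σ j) j)
    rw [hτ]
    set σ : Equiv.Perm (Fin (n + 1)) :=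
      (finSuccEquiv' j₀).trans ((Equiv.optionCongr τ).trans (finSuccEquiv' i).symm) with hσ
    have h1 : σ j₀ = i := by simp [hσ]
    have h2 : ∀ j : Fin n, σ (j₀.succAbove j) = i.succAbove (τ j) := by
      intro j; simp [hσ]
    calc A i j₀ + ∑ j, A.submatrix i.succAbove j₀.succAbove (τ j) j
        = ∑ j, A (σ j) j := by
          rw [Fin.sum_univ_succAbove (fun j => A (σ j) j) j₀, h1]
          congr 1
          exact Finset.sum_congr rfl fun j _ => by rw [h2 j]; rfl
      _ ≤ jacobiNumber A := Finset.le_sup (f := fun σ : Equiv.Perm (Fin (n+1)) =>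
            ∑ j, A (σ j) j) (Finset.mem_univ σ)
end

section
/- Let A be an (n+1)×(n+1) matrix of natural numbers with n ≥ 1, fix a column j₀, and for each row i let h(i) = J(A_{î,ĵ₀}) be the Jacobi number of the n×n matrix obtained from A by deleting row i and column j₀. Let e(i) = max_j A(i,j) be the maximum of row i. Then for every i one has h(i) ≤ Σ_{i' ≠ i} e(i'), and consequently Σ_i h(i) ≤ n · Σ_i e(i) (i.e. the sum of the h(i) is at most (number of rows − 1) times the sum of the row maxima). -/
/-- with `h i` the Jacobi number of `A` with row `i` and column `j₀`
deleted, and `e i = max_j A i j` the row maxima, one has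
`h i ≤ ∑_{i' ≠ i} e i'` for all `i`, and `∑ i, h i ≤ n * ∑ i, e i`. -/
theorem resolvent_order_bounds (n : ℕ) (hn : 1 ≤ n)
    (A : Matrix (Fin (n + 1)) (Fin (n + 1)) ℕ) (j₀ : Fin (n + 1))
    (h : Fin (n + 1) → ℕ)
    (hh : ∀ i, h i = jacobiNumber (A.submatrix i.succAbove j₀.succAbove))
    (e : Fin (n + 1) → ℕ) (he : ∀ i, e i = Finset.univ.sup fun j => A i j) :
    (∀ i, h i ≤ ∑ i' ∈ Finset.univ.erase i, e i') ∧
      (∑ i, h i) ≤ n * ∑ i, e i := by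
  have key : ∀ i, h i ≤ ∑ i' ∈ Finset.univ.erase i, e i' := by
    intro i
    have herase : ∑ i' ∈ Finset.univ.erase i, e i' = ∑ j, e (i.succAbove j) := by
      have h1 := Finset.add_sum_erase Finset.univ e (Finset.mem_univ i)
      have h2 := Fin.sum_univ_succAbove (fun i' => e i') i
      omega
    rw [hh i, herase, jacobiNumber]
    apply Finset.sup_le
    intro σ _
    calc ∑ j, A.submatrix i.succAbove j₀.succAbove (σ j) j
        ≤ ∑ j, e (i.succAbove (σ j)) := by
          apply Finset.sum_le_sum
          intro j _
          rw [he]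
          exact Finset.le_sup (Finset.mem_univ (j₀.succAbove j))
      _ = ∑ j, e (i.succAbove j) :=
          Equiv.sum_comp σ (fun j => e (i.succAbove j))
  refine ⟨key, ?_⟩
  calc ∑ i, h i ≤ ∑ i : Fin (n+1), ∑ i' ∈ Finset.univ.erase i, e i' :=
        Finset.sum_le_sum fun i _ => key i
    _ = ∑ i : Fin (n+1), ((∑ i', e i') - e i) := by
        refine Finset.sum_congr rfl fun i _ => ?_
        have h1 := Finset.add_sum_erase Finset.univ e (Finset.mem_univ i)
        omega
    _ ≤ n * ∑ i, e i := by
        have h1 : ∀ i ∈ (Finset.univ : Finset (Fin (n+1))), e i ≤ ∑ i', e i' :=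
          fun i _ => Finset.single_le_sum (fun _ _ => Nat.zero_le _) (Finset.mem_univ i)
        rw [Finset.sum_tsub_distrib _ h1, Finset.sum_const, Finset.card_univ,
          Fintype.card_fin, smul_eq_mul]
        have : (n+1) * (∑ i', e i') = n * (∑ i', e i') + ∑ i', e i' := by ring
        omega
end
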